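/- arXiv:2605.13003 — 4 statements merged into one kernel-verified Lean document; each statement's English description precedes it below -/
import Mathlib

section
/- For every M ≥ 0, every finite multiset S of integers contained in [0,M], and every k ≥ 0, the number of reverse [0,M] Dyck sequences with entry multiset S and di equal to k equals the number of affine [0,M] Dyck sequences with entry multiset S and di equal to k. -/
/-- A finite integer sequence is an *affine Dyck sequence* if each entry is at
most the previous entry plus 1. -/
def AffineDyck (x : List ℤ) : Prop := List.Chain' (fun a b => b ≤ a + 1) x

/-- A finite integer sequence is a *reverse Dyck sequence* if each entry is at
least the previous entry minus 1. -/
def ReverseDyck (x : List ℤ) : Prop := List.Chain' (fun a b => a - 1 ≤ b) x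

/-- `di x` is the number of pairs `i < j` with `x i = x j + 1`. -/
def di (x : List ℤ) : ℕ :=
  ((Finset.range x.length ×ˢ Finset.range x.length).filter
    (fun p => p.1 < p.2 ∧ x.getD p.1 0 = x.getD p.2 0 + 1)).card

/-!
Strong induction on the multiset `S`, removing its largest element `b`. In a reverse Dyck
sequence an entry `b` can only be followed by `b` or `b - 1`, so its entries `b` come in blocks
sitting right before the entries `b - 1` or at the end. Deleting them leaves a reverse Dyck
sequence on `S` without its copies of `b`, and the block sizes `g` form a weak composition of
`count b S` into `count (b - 1) S + 1` parts; conversely any such pair can be reassembled. A `b` in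
block `i` forms a `di`-pair with each of the later entries `b - 1`, so `di` grows by
`∑_{i < j} g i`. An affine Dyck sequence is the reverse of a reverse Dyck sequence, and reversal
turns `di` into the count of pairs `x i + 1 = x j`; reading the same decomposition backwards, with
`g` reversed, gives again the increment `∑_{i < j} g i`. So both families split in the same way
over the same weak compositions, and the induction hypothesis matches the pieces.
-/

namespace DyckSequence

open List

variable {b : ℤ}

lemma count_eq_sum_range {α : Type*} [DecidableEq α] (l : List α) (d v : α) :
    l.count v = ∑ j ∈ Finset.range l.length, if l.getD j d = v then 1 else 0 := by
  induction l with
  | nil => simp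
  | cons a l ih =>
    rw [length_cons, Finset.sum_range_succ', count_cons, ih]
    by_cases h : a = v <;> simp [h, Ne.symm]

@[simp] lemma di_nil : di [] = 0 := rfl

lemma di_cons (a : ℤ) (l : List ℤ) : di (a :: l) = l.count (a - 1) + di l := by
  have first_row : ∑ j ∈ Finset.range (l.length + 1),
      (if 0 < j ∧ (a :: l).getD 0 0 = (a :: l).getD j 0 + 1 then 1 else 0) =
      l.count (a - 1) := by
    rw [Finset.sum_range_succ', count_eq_sum_range _ 0]
    simp only [getD_cons_succ, getD_cons_zero, Nat.succ_pos, true_and, lt_irrefl, false_and,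
      if_false, add_zero]
    refine Finset.sum_congr rfl fun j _ => ?_
    simp only [eq_sub_iff_add_eq, eq_comm]
  have later_row (i : ℕ) : ∑ j ∈ Finset.range (l.length + 1),
      (if i + 1 < j ∧ (a :: l).getD (i + 1) 0 = (a :: l).getD j 0 + 1 then 1 else 0) =
      ∑ j ∈ Finset.range l.length, if i < j ∧ l.getD i 0 = l.getD j 0 + 1 then 1 else 0 := by
    rw [Finset.sum_range_succ']
    simp
  rw [di, Finset.card_filter, Finset.sum_product, length_cons, Finset.sum_range_succ',
    first_row, di, Finset.card_filter, Finset.sum_product]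
  simp only [later_row]
  omega

/-- The number of pairs `i < j` with `x i + 1 = x j`. -/
def ascPairs : List ℤ → ℕ
  | [] => 0
  | a :: l => l.count (a + 1) + ascPairs l

lemma di_append_singleton (u : List ℤ) (a : ℤ) : di (u ++ [a]) = di u + u.count (a + 1) := by
  induction u with
  | nil => simp [di_cons]
  | cons x u ih =>
    simp only [cons_append, di_cons, ih, count_append, count_cons, count_nil, beq_iff_eq]
    split_ifs <;> omega

lemma di_reverse (l : List ℤ) : di l.reverse = ascPairs l := by
  induction l with
  | nil => rfl
  | cons a l ih =>
    rw [reverse_cons, di_append_singleton, ih, count_reverse, ascPairs]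
    omega

lemma ascPairs_reverse (l : List ℤ) : ascPairs l.reverse = di l := by
  rw [← di_reverse, reverse_reverse]

lemma di_replicate_append (n : ℕ) (b : ℤ) (l : List ℤ) :
    di (replicate n b ++ l) = n * l.count (b - 1) + di l := by
  induction n with
  | zero => simp
  | succ n ih =>
    rw [replicate_succ, cons_append, di_cons, ih, count_append, count_replicate,
      if_neg (by simp; omega)]
    ring

lemma ascPairs_replicate_append (n : ℕ) (b : ℤ) (l : List ℤ) :
    ascPairs (replicate n b ++ l) = n * l.count (b + 1) + ascPairs l := by
  induction n with
  | zero => simp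
  | succ n ih =>
    rw [replicate_succ, cons_append, ascPairs, ih, count_append, count_replicate,
      if_neg (by simp)]
    ring

lemma affineDyck_iff_reverseDyck_reverse (x : List ℤ) :
    AffineDyck x ↔ ReverseDyck x.reverse := by
  show IsChain _ x ↔ IsChain _ x.reverse
  rw [isChain_reverse]
  exact ⟨fun h => h.imp fun a b hab => by omega, fun h => h.imp fun a b hab => by omega⟩

/-- `wtLeft g = ∑_{i < j} g i` and `wtRight g = ∑_{i < j} g j`. -/
def wtLeft : List ℕ → ℕ
  | [] => 0
  | n :: g => n * g.length + wtLeft g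

def wtRight : List ℕ → ℕ
  | [] => 0
  | _ :: g => g.sum + wtRight g

lemma wtLeft_append_singleton (g : List ℕ) (n : ℕ) : wtLeft (g ++ [n]) = wtLeft g + g.sum := by
  induction g with
  | nil => simp [wtLeft]
  | cons m g ih =>
    simp only [cons_append, wtLeft, ih, length_append, length_singleton, sum_cons]
    ring

lemma wtLeft_reverse (g : List ℕ) : wtLeft g.reverse = wtRight g := by
  induction g with
  | nil => rfl
  | cons n g ih => rw [reverse_cons, wtLeft_append_singleton, ih, sum_reverse, wtRight]; ring

/-- Puts `g[0]` copies of `b` before the first entry `b - 1` of `w`, `g[1]` copies before the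
second, and so on, and `g[r]` copies at the end, where `r` is the number of entries `b - 1`. -/
def insertBlocks (b : ℤ) : List ℕ → List ℤ → List ℤ
  | [], w => w
  | n :: _, [] => replicate n b
  | n :: g, a :: w =>
    if a = b - 1 then replicate n b ++ a :: insertBlocks b g w
    else a :: insertBlocks b (n :: g) w

/-- The numbers of entries `b` of `x` before its first entry `b - 1`, between the first and the
second, and so on, and after the last one; the first number is increased by `n`. -/
def blockSizes (b : ℤ) (n : ℕ) : List ℤ → List ℕ
  | [] => [n]
  | a :: l =>
    if a = b then blockSizes b (n + 1) l
    else if a = b - 1 then n :: blockSizes b 0 l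
    else blockSizes b n l

lemma length_blockSizes (n : ℕ) (x : List ℤ) :
    (blockSizes b n x).length = x.count (b - 1) + 1 := by
  induction x generalizing n with
  | nil => rfl
  | cons a x ih =>
    by_cases hb : a = b
    · simp [blockSizes, hb, ih, count_cons]; omega
    · by_cases hb₁ : a = b - 1 <;> simp [blockSizes, hb, hb₁, ih]

lemma sum_blockSizes (n : ℕ) (x : List ℤ) : (blockSizes b n x).sum = n + x.count b := by
  induction x generalizing n with
  | nil => simp [blockSizes]
  | cons a x ih =>
    by_cases hb : a = b
    · simp [blockSizes, hb, ih]; omega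
    · by_cases hb₁ : a = b - 1 <;> simp [blockSizes, hb, hb₁, ih]

lemma blockSizes_replicate_append (n j : ℕ) (x : List ℤ) :
    blockSizes b n (replicate j b ++ x) = blockSizes b (n + j) x := by
  induction j generalizing n with
  | zero => rfl
  | succ j ih =>
    rw [replicate_succ, cons_append, blockSizes, if_pos rfl, ih, add_assoc, add_comm 1]

lemma insertBlocks_perm {g : List ℕ} {w : List ℤ} (hg : g.length ≤ w.count (b - 1) + 1) :
    insertBlocks b g w ~ replicate g.sum b ++ w := by
  induction w generalizing g with
  | nil =>
    match g, hg with
    | [], _ => simp [insertBlocks]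
    | [n], _ => simp [insertBlocks]
  | cons a w ih =>
    match g, hg with
    | [], _ => simp [insertBlocks]
    | n :: g, hg =>
      rw [insertBlocks, count_cons] at *
      split_ifs with ha
      · simp only [ha, beq_self_eq_true, if_true, length_cons] at hg
        rw [sum_cons, replicate_add, append_assoc]
        exact ((ih (by omega)).cons a |>.trans perm_middle.symm).append_left _
      · exact (ih (by simpa [ha] using hg)).cons a |>.trans perm_middle.symm

lemma count_insertBlocks {g : List ℕ} {w : List ℤ} (hg : g.length ≤ w.count (b - 1) + 1)
    (c : ℤ) : (insertBlocks b g w).count c = (if b = c then g.sum else 0) + w.count c := by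
  simp [(insertBlocks_perm hg).count_eq, count_replicate]

lemma coe_insertBlocks {g : List ℕ} {w : List ℤ} (hg : g.length ≤ w.count (b - 1) + 1) :
    (insertBlocks b g w : Multiset ℤ) = Multiset.replicate g.sum b + w := by
  rw [Multiset.coe_eq_coe.2 (insertBlocks_perm hg), ← Multiset.coe_add, Multiset.coe_replicate]

lemma di_insertBlocks {g : List ℕ} {w : List ℤ} (hw : ∀ a ∈ w, a ≤ b - 1)
    (hg : g.length = w.count (b - 1) + 1) : di (insertBlocks b g w) = di w + wtLeft g := by
  induction w generalizing g with
  | nil =>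
    match g, hg with
    | [n], _ => simpa [insertBlocks, wtLeft] using di_replicate_append n b []
  | cons a w ih =>
    obtain ⟨n, g, rfl⟩ := exists_cons_of_length_eq_add_one hg
    have hw' : ∀ a ∈ w, a ≤ b - 1 := fun a ha => hw a (mem_cons_of_mem _ ha)
    have ha : a ≤ b - 1 := hw a mem_cons_self
    rw [count_cons] at hg
    by_cases hab : a = b - 1
    · subst hab
      simp only [length_cons, beq_self_eq_true, if_true, add_left_inj] at hg
      rw [insertBlocks, if_pos rfl, di_replicate_append, di_cons, di_cons, count_cons_self,
        count_insertBlocks hg.le, count_insertBlocks hg.le, ih hw' hg, wtLeft, hg,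
        if_neg (by omega), if_neg (by omega)]
      ring
    · simp only [hab, beq_iff_eq, if_false, add_zero] at hg
      rw [insertBlocks, if_neg hab, di_cons, di_cons, count_insertBlocks hg.le,
        if_neg (by omega), ih hw' hg]
      ring

lemma ascPairs_insertBlocks {g : List ℕ} {w : List ℤ} (hw : ∀ a ∈ w, a ≤ b - 1)
    (hg : g.length = w.count (b - 1) + 1) :
    ascPairs (insertBlocks b g w) = ascPairs w + wtRight g := by
  induction w generalizing g with
  | nil =>
    match g, hg with
    | [n], _ => simpa [insertBlocks, wtRight, ascPairs] using ascPairs_replicate_append n b []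
  | cons a w ih =>
    obtain ⟨n, g, rfl⟩ := exists_cons_of_length_eq_add_one hg
    have hw' : ∀ a ∈ w, a ≤ b - 1 := fun a ha => hw a (mem_cons_of_mem _ ha)
    have ha : a ≤ b - 1 := hw a mem_cons_self
    have not_mem : ∀ c, b ≤ c → w.count c = 0 := fun c hc =>
      count_eq_zero.2 fun hcw => by have := hw' c hcw; omega
    rw [count_cons] at hg
    by_cases hab : a = b - 1
    · subst hab
      simp only [length_cons, beq_self_eq_true, if_true, add_left_inj] at hg
      rw [insertBlocks, if_pos rfl, ascPairs_replicate_append, ascPairs, ascPairs, sub_add_cancel,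
        count_cons, count_insertBlocks hg.le, count_insertBlocks hg.le, ih hw' hg, wtRight,
        not_mem _ le_rfl, not_mem (b + 1) (by omega)]
      simp [show b - 1 ≠ b + 1 by omega]
      ring
    · simp only [hab, beq_iff_eq, if_false, add_zero] at hg
      rw [insertBlocks, if_neg hab, ascPairs, ascPairs, count_insertBlocks hg.le,
        if_neg (by omega), ih hw' hg]
      ring

lemma blockSizes_insertBlocks {n m : ℕ} {g : List ℕ} {w : List ℤ}
    (hw : ∀ a ∈ w, a ≤ b - 1) (hg : g.length = w.count (b - 1)) :
    blockSizes b n (insertBlocks b (m :: g) w) = (n + m) :: g := by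
  induction w generalizing n m g with
  | nil =>
    match g, hg with
    | [], _ => simpa [insertBlocks, blockSizes] using blockSizes_replicate_append n m []
  | cons a w ih =>
    have hw' : ∀ a ∈ w, a ≤ b - 1 := fun a ha => hw a (mem_cons_of_mem _ ha)
    have hab : a ≠ b := by have := hw a mem_cons_self; omega
    rw [count_cons] at hg
    by_cases ha : a = b - 1
    · subst ha
      obtain ⟨m', g, rfl⟩ := exists_cons_of_length_eq_add_one (by simpa using hg)
      simp only [length_cons, beq_self_eq_true, if_true, add_left_inj] at hg
      rw [insertBlocks, if_pos rfl, blockSizes_replicate_append, blockSizes, if_neg hab,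
        if_pos rfl, ih hw' hg, zero_add]
    · simp only [ha, beq_iff_eq, if_false, add_zero] at hg
      rw [insertBlocks, if_neg ha, blockSizes, if_neg hab, if_neg ha, ih hw' hg]

lemma blockSizes_zero_insertBlocks {g : List ℕ} {w : List ℤ} (hw : ∀ a ∈ w, a ≤ b - 1)
    (hg : g.length = w.count (b - 1) + 1) : blockSizes b 0 (insertBlocks b g w) = g := by
  obtain ⟨m, g, rfl⟩ := exists_cons_of_length_eq_add_one hg
  rw [blockSizes_insertBlocks hw (by simpa using hg), zero_add]

lemma filter_insertBlocks (g : List ℕ) {w : List ℤ} (hw : b ∉ w) :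
    (insertBlocks b g w).filter (· ≠ b) = w := by
  induction w generalizing g with
  | nil => cases g <;> simp [insertBlocks]
  | cons a w ih =>
    have hab : a ≠ b := fun h => hw (h ▸ mem_cons_self)
    have hw' : b ∉ w := fun h => hw (mem_cons_of_mem _ h)
    simp only [ne_eq, decide_not] at ih ⊢
    cases g with
    | nil => simpa [insertBlocks, hab] using fun c hc (h : c = b) => hw' (h ▸ hc)
    | cons n g =>
      by_cases ha : a = b - 1
      · simp [insertBlocks, ha, ih g hw']
      · simp [insertBlocks, ha, hab, ih _ hw']

lemma insertBlocks_blockSizes {n : ℕ} {x : List ℤ} (hx : ReverseDyck x)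
    (hxb : ∀ a ∈ x, a ≤ b) (hn : n ≠ 0 → ∀ a ∈ x.head?, b - 1 ≤ a) :
    insertBlocks b (blockSizes b n x) (x.filter (· ≠ b)) = replicate n b ++ x := by
  induction x generalizing n with
  | nil => simp [blockSizes, insertBlocks]
  | cons a x ih =>
    obtain ⟨hhead, hx'⟩ := isChain_cons.mp hx
    have hxb' : ∀ a ∈ x, a ≤ b := fun a ha => hxb a (mem_cons_of_mem _ ha)
    by_cases hab : a = b
    · subst hab
      rw [blockSizes, if_pos rfl, filter_cons_of_neg (by simp),
        ih hx' hxb' fun _ => hhead, replicate_succ', append_assoc, singleton_append]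
    · rw [filter_cons_of_pos (by simpa using hab), blockSizes, if_neg hab]
      by_cases ha : a = b - 1
      · rw [if_pos ha, insertBlocks, if_pos ha, ih hx' hxb' (absurd rfl), replicate_zero,
          nil_append]
      · have hn0 : n = 0 := by
          by_contra h
          have := hn h a rfl
          have := hxb a mem_cons_self
          omega
        subst hn0
        obtain ⟨m, g, hmg⟩ := exists_cons_of_length_eq_add_one (length_blockSizes (b := b) 0 x)
        have ih := ih hx' hxb' (absurd rfl)
        rw [if_neg ha, hmg, insertBlocks, if_neg ha, ← hmg, ih]
        rfl

lemma le_of_mem_head?_insertBlocks {c : ℤ} {g : List ℕ} {w : List ℤ} (hcb : c ≤ b)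
    (hcw : ∀ h ∈ w.head?, c ≤ h) : ∀ h ∈ (insertBlocks b g w).head?, c ≤ h := by
  match g, w with
  | [], _ => simpa only [insertBlocks] using hcw
  | n :: _, [] => cases n <;> simp [insertBlocks, replicate_succ, hcb]
  | n :: g, a :: w =>
    rw [insertBlocks]
    split_ifs
    · cases n <;> simp [replicate_succ, hcb, hcw a rfl]
    · exact hcw

lemma reverseDyck_insertBlocks (g : List ℕ) {w : List ℤ} (hw : ReverseDyck w)
    (hwb : ∀ a ∈ w, a ≤ b - 1) : ReverseDyck (insertBlocks b g w) := by
  induction w generalizing g with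
  | nil =>
    cases g with
    | nil => exact isChain_nil
    | cons n g => exact isChain_replicate_of_rel (r := fun a b : ℤ => a - 1 ≤ b) n (by omega)
  | cons a w ih =>
    obtain ⟨hhead, hw'⟩ := isChain_cons.mp hw
    have hwb' : ∀ a ∈ w, a ≤ b - 1 := fun a ha => hwb a (mem_cons_of_mem _ ha)
    have ha : a ≤ b - 1 := hwb a mem_cons_self
    match g with
    | [] => exact hw
    | n :: g =>
      rw [insertBlocks]
      split_ifs with hab
      · refine isChain_append.mpr ⟨isChain_replicate_of_rel _ (by omega), ?_, ?_⟩
        · exact isChain_cons.mpr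
            ⟨le_of_mem_head?_insertBlocks (by omega) hhead, ih g hw' hwb'⟩
        · intro x hx y hy
          rw [eq_of_mem_replicate (mem_of_mem_getLast? hx), ← Option.mem_some_iff.mp hy, hab]
      · exact isChain_cons.mpr
          ⟨le_of_mem_head?_insertBlocks (by omega) hhead, ih _ hw' hwb'⟩

lemma reverseDyck_cons_filter {c : ℤ} {x : List ℤ} (hcb : c ≤ b) (hx : ReverseDyck (c :: x))
    (hxb : ∀ a ∈ x, a ≤ b) : ReverseDyck (c :: x.filter (· ≠ b)) := by
  induction x generalizing c with
  | nil => exact isChain_singleton c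
  | cons a x ih =>
    obtain ⟨hca, hax⟩ := isChain_cons_cons.mp hx
    obtain ⟨hhead, hx'⟩ := isChain_cons.mp hax
    have hxb' : ∀ a ∈ x, a ≤ b := fun a ha => hxb a (mem_cons_of_mem _ ha)
    by_cases hab : a = b
    · rw [filter_cons_of_neg (by simpa using hab)]
      refine ih hcb (isChain_cons.mpr ⟨fun h hh => ?_, hx'⟩) hxb'
      have := hhead h hh
      omega
    · rw [filter_cons_of_pos (by simpa using hab)]
      exact isChain_cons_cons.mpr ⟨hca, ih (hxb a mem_cons_self) hax hxb'⟩

lemma reverseDyck_filter {x : List ℤ} (hx : ReverseDyck x) (hxb : ∀ a ∈ x, a ≤ b) :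
    ReverseDyck (x.filter (· ≠ b)) := by
  match x with
  | [] => exact isChain_nil
  | a :: x =>
    have h := reverseDyck_cons_filter (hxb a mem_cons_self) hx
      fun c hc => hxb c (mem_cons_of_mem _ hc)
    by_cases hab : a = b
    · rw [filter_cons_of_neg (by simpa using hab)]
      exact h.tail
    · rwa [filter_cons_of_pos (by simpa using hab)]

def WeakComposition (parts total : ℕ) : Type :=
  {g : List ℕ // g.length = parts ∧ g.sum = total}

def WeakComposition.reverse {parts total : ℕ} :
    WeakComposition parts total ≃ WeakComposition parts total :=
  (Function.Involutive.toPerm _ reverse_involutive).subtypeEquiv fun g => by simp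

abbrev ReverseDyckOf (S : Multiset ℤ) : Type :=
  {x : List ℤ // ReverseDyck x ∧ (x : Multiset ℤ) = S}

abbrev AffineDyckOf (S : Multiset ℤ) : Type :=
  {x : List ℤ // AffineDyck x ∧ (x : Multiset ℤ) = S}

def reverseEquiv {S : Multiset ℤ} : AffineDyckOf S ≃ ReverseDyckOf S :=
  (Function.Involutive.toPerm _ reverse_involutive).subtypeEquiv fun x => by
    simp [affineDyck_iff_reverseDyck_reverse]

section Peel

variable {S : Multiset ℤ}

lemma le_of_coe_eq (hS : ∀ a ∈ S, a ≤ b) {x : List ℤ} (hx : (x : Multiset ℤ) = S) :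
    ∀ a ∈ x, a ≤ b :=
  fun a ha => hS a (hx ▸ Multiset.mem_coe.2 ha)

lemma le_sub_one_of_coe_eq_filter (hS : ∀ a ∈ S, a ≤ b) {w : List ℤ}
    (hw : (w : Multiset ℤ) = S.filter (· ≠ b)) :
    ∀ a ∈ w, a ≤ b - 1 := by
  intro a ha
  have := Multiset.mem_filter.1 (hw ▸ Multiset.mem_coe.2 ha)
  have := hS a this.1
  omega

lemma count_sub_one_of_coe_eq_filter {w : List ℤ}
    (hw : (w : Multiset ℤ) = S.filter (· ≠ b)) :
    w.count (b - 1) = S.count (b - 1) := by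
  rw [← Multiset.coe_count, hw, Multiset.count_filter_of_pos (by omega)]

def peelMax (hS : ∀ a ∈ S, a ≤ b) :
    ReverseDyckOf S ≃
      WeakComposition (S.count (b - 1) + 1) (S.count b) × ReverseDyckOf (S.filter (· ≠ b)) where
  toFun x :=
    (⟨blockSizes b 0 x.1, by rw [length_blockSizes, ← Multiset.coe_count, x.2.2],
        by rw [sum_blockSizes, ← Multiset.coe_count, x.2.2, zero_add]⟩,
      ⟨x.1.filter (· ≠ b), reverseDyck_filter x.2.1 (le_of_coe_eq hS x.2.2),
        by rw [← Multiset.filter_coe, x.2.2]⟩)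
  invFun p :=
    ⟨insertBlocks b p.1.1 p.2.1,
      reverseDyck_insertBlocks _ p.2.2.1 (le_sub_one_of_coe_eq_filter hS p.2.2.2),
      by
        rw [coe_insertBlocks (by rw [p.1.2.1, count_sub_one_of_coe_eq_filter p.2.2.2]),
          p.1.2.2, p.2.2.2, ← Multiset.filter_eq', Multiset.filter_add_not]⟩
  left_inv x := Subtype.ext <| by
    simpa using insertBlocks_blockSizes x.2.1 (le_of_coe_eq hS x.2.2) (absurd rfl)
  right_inv p := by
    have hw := le_sub_one_of_coe_eq_filter hS p.2.2.2
    refine Prod.ext (Subtype.ext ?_) (Subtype.ext ?_)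
    · exact blockSizes_zero_insertBlocks hw
        (by rw [p.1.2.1, count_sub_one_of_coe_eq_filter p.2.2.2])
    · exact filter_insertBlocks _ fun hb => by have := hw b hb; omega

lemma di_peelMax_symm (hS : ∀ a ∈ S, a ≤ b)
    (p : WeakComposition (S.count (b - 1) + 1) (S.count b) × ReverseDyckOf (S.filter (· ≠ b))) :
    di ((peelMax hS).symm p).1 = di p.2.1 + wtLeft p.1.1 :=
  di_insertBlocks (le_sub_one_of_coe_eq_filter hS p.2.2.2)
    (by rw [p.1.2.1, count_sub_one_of_coe_eq_filter p.2.2.2])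

lemma ascPairs_peelMax_symm (hS : ∀ a ∈ S, a ≤ b)
    (p : WeakComposition (S.count (b - 1) + 1) (S.count b) × ReverseDyckOf (S.filter (· ≠ b))) :
    ascPairs ((peelMax hS).symm p).1 = ascPairs p.2.1 + wtRight p.1.1 :=
  ascPairs_insertBlocks (le_sub_one_of_coe_eq_filter hS p.2.2.2)
    (by rw [p.1.2.1, count_sub_one_of_coe_eq_filter p.2.2.2])

def affinePeelMax (hS : ∀ a ∈ S, a ≤ b) :
    AffineDyckOf S ≃
      WeakComposition (S.count (b - 1) + 1) (S.count b) × AffineDyckOf (S.filter (· ≠ b)) :=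
  reverseEquiv.trans <| (peelMax hS).trans <| WeakComposition.reverse.prodCongr reverseEquiv.symm

lemma di_affinePeelMax_symm (hS : ∀ a ∈ S, a ≤ b)
    (p : WeakComposition (S.count (b - 1) + 1) (S.count b) × AffineDyckOf (S.filter (· ≠ b))) :
    di ((affinePeelMax hS).symm p).1 = di p.2.1 + wtLeft p.1.1 := by
  change di ((peelMax hS).symm (WeakComposition.reverse.symm p.1, reverseEquiv p.2)).1.reverse = _
  rw [di_reverse, ascPairs_peelMax_symm]
  change ascPairs p.2.1.reverse + wtRight p.1.1.reverse = _
  rw [ascPairs_reverse, ← wtLeft_reverse, reverse_reverse]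

end Peel

theorem exists_equiv_reverseDyckOf_affineDyckOf (S : Multiset ℤ) :
    ∃ e : ReverseDyckOf S ≃ AffineDyckOf S, ∀ x, di (e x).1 = di x.1 := by
  induction S using Multiset.strongInductionOn with
  | ih S ih =>
    rcases eq_or_ne S 0 with rfl | hS0
    · refine ⟨Equiv.subtypeEquivRight fun x => and_congr_left fun hx => ?_, fun _ => rfl⟩
      rw [(Multiset.coe_eq_zero _).1 hx]
      exact iff_of_true List.isChain_nil List.isChain_nil
    obtain ⟨b, hbS, hS⟩ := Multiset.exists_max_image id hS0
    have hlt : S.filter (· ≠ b) < S := (Multiset.filter_le _ _).lt_of_ne fun h =>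
      (Multiset.mem_filter.1 (h.symm ▸ hbS : b ∈ S.filter (· ≠ b))).2 rfl
    obtain ⟨e, he⟩ := ih _ hlt
    refine ⟨(peelMax hS).trans <| ((Equiv.refl _).prodCongr e).trans (affinePeelMax hS).symm,
      fun x => ?_⟩
    conv_rhs => rw [← (peelMax hS).symm_apply_apply x]
    simp only [Equiv.trans_apply, Equiv.prodCongr_apply, Equiv.coe_refl, Prod.map,
      di_affinePeelMax_symm, di_peelMax_symm, he, id]

def subtypeEquivOfForallMem (P : List ℤ → Prop) (Q : ℤ → Prop) {S : Multiset ℤ}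
    (hS : ∀ a ∈ S, Q a) (k : ℕ) :
    {x : List ℤ // P x ∧ (∀ a ∈ x, Q a) ∧ (x : Multiset ℤ) = S ∧ di x = k} ≃
      {x : {x : List ℤ // P x ∧ (x : Multiset ℤ) = S} // di x.1 = k} :=
  (Equiv.subtypeEquivRight fun _ =>
    ⟨fun ⟨hP, _, hx, hk⟩ => ⟨⟨hP, hx⟩, hk⟩,
      fun ⟨⟨hP, hx⟩, hk⟩ => ⟨hP, fun a ha => hS a (hx ▸ Multiset.mem_coe.2 ha), hx, hk⟩⟩
    ).trans (Equiv.subtypeSubtypeEquivSubtypeInter _ fun x => di x = k).symm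

end DyckSequence

theorem affine_reverse_transport_general (M : ℤ) (S : Multiset ℤ)
    (hS : ∀ a ∈ S, 0 ≤ a ∧ a ≤ M) (k : ℕ) :
    Nat.card {x : List ℤ //
      ReverseDyck x ∧ (∀ a ∈ x, 0 ≤ a ∧ a ≤ M) ∧
      (x : Multiset ℤ) = S ∧ di x = k} =
    Nat.card {x : List ℤ //
      AffineDyck x ∧ (∀ a ∈ x, 0 ≤ a ∧ a ≤ M) ∧
      (x : Multiset ℤ) = S ∧ di x = k} := by
  obtain ⟨e, he⟩ := DyckSequence.exists_equiv_reverseDyckOf_affineDyckOf S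
  exact Nat.card_congr <| (DyckSequence.subtypeEquivOfForallMem _ _ hS k).trans <|
    (e.subtypeEquiv fun x => by rw [he]).trans (DyckSequence.subtypeEquivOfForallMem _ _ hS k).symm

/-- **Affine–reverse transport, counted.**  For every `M ≥ 0`, every finite
multiset `S` of integers contained in `[0, M]` and every `k ≥ 0`, the number
of reverse `[0, M]` Dyck sequences with entry multiset `S` and `di = k`
equals the number of affine `[0, M]` Dyck sequences with entry multiset `S`
and `di = k`. -/
theorem affine_reverse_transport (M : ℤ) (hM : 0 ≤ M) (S : Multiset ℤ)
    (hS : ∀ a ∈ S, 0 ≤ a ∧ a ≤ M) (k : ℕ) :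
    Nat.card {x : List ℤ //
      ReverseDyck x ∧ (∀ a ∈ x, 0 ≤ a ∧ a ≤ M) ∧
      (x : Multiset ℤ) = S ∧ di x = k} =
    Nat.card {x : List ℤ //
      AffineDyck x ∧ (∀ a ∈ x, 0 ≤ a ∧ a ≤ M) ∧
      (x : Multiset ℤ) = S ∧ di x = k} :=
  affine_reverse_transport_general M S hS k
end

section
/- Let D = (x_0,…,x_{n−1}) be an ordinary Dyck sequence. Then defc(D) = C(n,2) − area(D) − dinv(D) equals the number of pairs (i,j) with 0 ≤ i < j < n satisfying one of: (A) x_i > x_j + 1, or (B) x_i < x_j and i is not the index of the first occurrence of the value x_i in D. -/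
/-- An *ordinary Dyck sequence* is a nonempty affine Dyck sequence starting at
`0` with all entries nonnegative. -/
def OrdDyck (x : List ℤ) : Prop :=
  x ≠ [] ∧ AffineDyck x ∧ x.getD 0 0 = 0 ∧ ∀ a ∈ x, 0 ≤ a

/-- `nv x` is the number of pairs `i < j` with `x i = x j`. -/
def nv (x : List ℤ) : ℕ :=
  ((Finset.range x.length ×ˢ Finset.range x.length).filter
    (fun p => p.1 < p.2 ∧ x.getD p.1 0 = x.getD p.2 0)).card

/-- `dinv x = di x + nv x`. -/
def dinv (x : List ℤ) : ℕ := di x + nv x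

/-- `area x` is the sum of the entries of `x`. -/
def area (x : List ℤ) : ℤ := x.sum

/-- `defc T = C(n,2) − area T − dinv T` for a length-`n` word, as an integer. -/
def defc (T : List ℤ) : ℤ := (T.length.choose 2 : ℤ) - area T - dinv T

private lemma list_sum_eq_range (l : List ℤ) :
    l.sum = ∑ i ∈ Finset.range l.length, l.getD i 0 := by
  induction l with
  | nil => simp
  | cons a t ih =>
    rw [List.sum_cons, List.length_cons, Finset.sum_range_succ']
    simp [ih, add_comm]

private lemma ivt (f : ℕ → ℤ) (h0 : f 0 = 0) :
    ∀ j, (∀ i, i < j → f (i + 1) ≤ f i + 1) →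
      ∀ v : ℤ, 0 ≤ v → v ≤ f j → ∃ i, i ≤ j ∧ f i = v := by
  intro j
  induction j with
  | zero =>
    intro _ v hv hv2
    exact ⟨0, le_refl 0, by omega⟩
  | succ j ih =>
    intro hst v hv hv2
    by_cases h : v ≤ f j
    · obtain ⟨i, hi, he⟩ := ih (fun i hi => hst i (by omega)) v hv h
      exact ⟨i, by omega, he⟩
    · have hs := hst j (by omega)
      exact ⟨j + 1, le_refl _, by omega⟩

private lemma colcount (f : ℕ → ℤ) (h0 : f 0 = 0) (j : ℕ)
    (hstep : ∀ i, i < j → f (i + 1) ≤ f i + 1)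
    (hnn : ∀ i, i ≤ j → 0 ≤ f i) :
    ((Finset.range j).filter (fun i => f i < f j ∧ ∀ i' < i, f i' ≠ f i)).card
      = (f j).toNat := by
  classical
  rw [show (f j).toNat = (Finset.range (f j).toNat).card by simp]
  apply Finset.card_bij (fun i _ => (f i).toNat)
  · intro a ha
    simp only [Finset.mem_filter, Finset.mem_range] at ha ⊢
    have := hnn a (le_of_lt ha.1)
    omega
  · intro a₁ h₁ a₂ h₂ he
    simp only [Finset.mem_filter, Finset.mem_range] at h₁ h₂
    have e : f a₁ = f a₂ := by
      have := hnn a₁ (le_of_lt h₁.1); have := hnn a₂ (le_of_lt h₂.1); omega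
    by_contra hne
    rcases Nat.lt_or_ge a₁ a₂ with h | h
    · exact h₂.2.2 a₁ h e
    · exact h₁.2.2 a₂ (by omega) e.symm
  · intro b hb
    simp only [Finset.mem_range] at hb
    have hvb : (b : ℤ) < f j := by
      have := hnn j le_rfl; omega
    obtain ⟨i, hij, hfi⟩ := ivt f h0 j hstep (b : ℤ) (by positivity) (le_of_lt hvb)
    have hexP : ∃ i, f i = (b : ℤ) := ⟨i, hfi⟩
    refine ⟨Nat.find hexP, ?_, ?_⟩
    · have hspec := Nat.find_spec hexP
      have hle : Nat.find hexP ≤ i := Nat.find_min' hexP hfi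
      simp only [Finset.mem_filter, Finset.mem_range]
      have hlt : Nat.find hexP < j := by
        rcases Nat.lt_or_ge (Nat.find hexP) j with h | h
        · exact h
        · have : Nat.find hexP = j := by omega
          rw [this] at hspec; omega
      refine ⟨hlt, by rw [hspec]; exact hvb, ?_⟩
      intro i' hi' hcon
      exact Nat.find_min hexP hi' (hcon ▸ hspec)
    · rw [Nat.find_spec hexP]; simp

private lemma key_sum (n : ℕ) (Q : ℕ → ℕ → Prop) [∀ i j, Decidable (Q i j)] :
    ((Finset.range n ×ˢ Finset.range n).filter
      (fun p => p.1 < p.2 ∧ Q p.1 p.2)).card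
      = ∑ j ∈ Finset.range n, ((Finset.range j).filter (fun i => Q i j)).card := by
  rw [Finset.card_filter, Finset.sum_product, Finset.sum_comm]
  refine Finset.sum_congr rfl ?_
  intro j hj
  simp only [Finset.mem_range] at hj
  rw [Finset.card_filter]
  rw [show Finset.range j = (Finset.range n).filter (fun i => i < j) by
    ext x; simp only [Finset.mem_filter, Finset.mem_range]; omega]
  rw [Finset.sum_filter]
  refine Finset.sum_congr rfl ?_
  intro i _
  by_cases h1 : i < j <;> by_cases h2 : Q i j <;> simp [h1, h2]

/-- **Deficit pairs.**  For an ordinary Dyck sequence `D = (x_0,…,x_{n−1})`,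
`defc(D)` equals the number of pairs `i < j` satisfying
(A) `x_i > x_j + 1`, or (B) `x_i < x_j` and `i` is not the first occurrence of
the value `x_i` in `D`. -/
theorem deficit_pair_count (D : List ℤ) (hD : OrdDyck D) :
    defc D =
      (((Finset.range D.length ×ˢ Finset.range D.length).filter
        (fun p => p.1 < p.2 ∧
          (D.getD p.2 0 + 1 < D.getD p.1 0 ∨
            (D.getD p.1 0 < D.getD p.2 0 ∧
              ∃ i ∈ Finset.range p.1, D.getD i 0 = D.getD p.1 0)))).card : ℤ) := by
  classical
  obtain ⟨hne, hch, h00, hpos⟩ := hD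
  set f : ℕ → ℤ := fun i => D.getD i 0 with hf
  have h0 : f 0 = 0 := h00
  have hnn : ∀ i, i < D.length → 0 ≤ f i := by
    intro i hi
    have : f i = D[i] := List.getD_eq_getElem D 0 hi
    rw [this]
    exact hpos _ (List.getElem_mem hi)
  have hstep : ∀ i, i + 1 < D.length → f (i + 1) ≤ f i + 1 := by
    intro i hi
    have h := List.isChain_iff_getElem.mp hch i (by omega)
    have e1 : f (i + 1) = D[i + 1] := List.getD_eq_getElem D 0 hi
    have e2 : f i = D[i] := List.getD_eq_getElem D 0 (by omega)
    rw [e1, e2]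
    simpa [List.get_eq_getElem] using h
  -- per-column partition identity
  have hcol : ∀ j, j < D.length →
      j = ((Finset.range j).filter (fun i => f i = f j + 1)).card
        + ((Finset.range j).filter (fun i => f i = f j)).card
        + ((Finset.range j).filter
            (fun i => f j + 1 < f i ∨ (f i < f j ∧ ∃ i' ∈ Finset.range i, f i' = f i))).card
        + ((Finset.range j).filter (fun i => f i < f j ∧ ∀ i' < i, f i' ≠ f i)).card := by
    intro j hj
    rw [Finset.card_filter, Finset.card_filter, Finset.card_filter, Finset.card_filter,
      ← Finset.sum_add_distrib, ← Finset.sum_add_distrib, ← Finset.sum_add_distrib]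
    have hsum : ∀ i ∈ Finset.range j, (1 : ℕ) =
        (if f i = f j + 1 then 1 else 0) + (if f i = f j then 1 else 0)
        + (if f j + 1 < f i ∨ (f i < f j ∧ ∃ i' ∈ Finset.range i, f i' = f i) then 1 else 0)
        + (if f i < f j ∧ ∀ i' < i, f i' ≠ f i then 1 else 0) := by
      intro i _
      by_cases hE : ∃ i' ∈ Finset.range i, f i' = f i
      · have hE' : ¬ (∀ i' < i, f i' ≠ f i) := by
          obtain ⟨i', hi', he⟩ := hE
          simp only [Finset.mem_range] at hi'
          push_neg; exact ⟨i', hi', he⟩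
        simp only [eq_true hE, eq_false hE']
        simp only [and_true, and_false, if_false]
        split_ifs <;> omega
      · have hE' : ∀ i' < i, f i' ≠ f i := by
          intro i' hi' hc
          exact hE ⟨i', Finset.mem_range.mpr hi', hc⟩
        simp only [eq_false hE, eq_true hE']
        simp only [and_false, or_false, and_true]
        split_ifs <;> omega
    calc j = ∑ i ∈ Finset.range j, 1 := by simp
      _ = _ := Finset.sum_congr rfl hsum
  -- rewrite the four global counts as column sums
  have hdi : di D = ∑ j ∈ Finset.range D.length,
      ((Finset.range j).filter (fun i => f i = f j + 1)).card :=
    key_sum D.length (fun i j => f i = f j + 1)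
  have hnv : nv D = ∑ j ∈ Finset.range D.length,
      ((Finset.range j).filter (fun i => f i = f j)).card :=
    key_sum D.length (fun i j => f i = f j)
  have htgt : (((Finset.range D.length ×ˢ Finset.range D.length).filter
        (fun p => p.1 < p.2 ∧
          (D.getD p.2 0 + 1 < D.getD p.1 0 ∨
            (D.getD p.1 0 < D.getD p.2 0 ∧
              ∃ i ∈ Finset.range p.1, D.getD i 0 = D.getD p.1 0)))).card)
      = ∑ j ∈ Finset.range D.length, ((Finset.range j).filter
            (fun i => f j + 1 < f i ∨ (f i < f j ∧ ∃ i' ∈ Finset.range i, f i' = f i))).card :=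
    key_sum D.length (fun i j => f j + 1 < f i ∨ (f i < f j ∧ ∃ i' ∈ Finset.range i, f i' = f i))
  -- first-occurrence column counts sum to area
  have hc5 : ∀ j ∈ Finset.range D.length,
      ((Finset.range j).filter (fun i => f i < f j ∧ ∀ i' < i, f i' ≠ f i)).card
        = (f j).toNat := by
    intro j hj
    simp only [Finset.mem_range] at hj
    exact colcount f h0 j (fun i hi => hstep i (by omega)) (fun i hi => hnn i (by omega))
  have harea : area D = ∑ j ∈ Finset.range D.length,
      (((Finset.range j).filter (fun i => f i < f j ∧ ∀ i' < i, f i' ≠ f i)).card : ℤ) := by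
    rw [area, list_sum_eq_range]
    refine Finset.sum_congr rfl ?_
    intro j hj
    rw [hc5 j hj]
    simp only [Finset.mem_range] at hj
    exact (Int.toNat_of_nonneg (hnn j hj)).symm
  -- total pairs
  have htot : D.length.choose 2 = ∑ j ∈ Finset.range D.length, j := by
    rw [Finset.sum_range_id, Nat.choose_two_right]
  -- combine
  have hmain : D.length.choose 2 = di D + nv D
      + ((Finset.range D.length ×ˢ Finset.range D.length).filter
        (fun p => p.1 < p.2 ∧
          (D.getD p.2 0 + 1 < D.getD p.1 0 ∨
            (D.getD p.1 0 < D.getD p.2 0 ∧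
              ∃ i ∈ Finset.range p.1, D.getD i 0 = D.getD p.1 0)))).card
      + ∑ j ∈ Finset.range D.length,
          ((Finset.range j).filter (fun i => f i < f j ∧ ∀ i' < i, f i' ≠ f i)).card := by
    rw [htot, hdi, hnv, htgt, ← Finset.sum_add_distrib, ← Finset.sum_add_distrib,
      ← Finset.sum_add_distrib]
    refine Finset.sum_congr rfl ?_
    intro j hj
    simp only [Finset.mem_range] at hj
    exact hcol j hj
  rw [defc, dinv, harea]
  have hmz : ((D.length.choose 2 : ℕ) : ℤ) = (di D : ℤ) + (nv D : ℤ)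
      + (((Finset.range D.length ×ˢ Finset.range D.length).filter
        (fun p => p.1 < p.2 ∧
          (D.getD p.2 0 + 1 < D.getD p.1 0 ∨
            (D.getD p.1 0 < D.getD p.2 0 ∧
              ∃ i ∈ Finset.range p.1, D.getD i 0 = D.getD p.1 0)))).card : ℤ)
      + ∑ j ∈ Finset.range D.length,
          (((Finset.range j).filter (fun i => f i < f j ∧ ∀ i' < i, f i' ≠ f i)).card : ℤ) := by
    rw [hmain]; push_cast; ring
  rw [hmz]
  push_cast
  ring
end

section
/- Let T = (T_0,…,T_{n−1}) be any finite sequence of nonnegative integers. For 0 ≤ i < j < n, call (i,j) type A if T_i > T_j + 1, and type B if T_i < T_j and i is not the index of the first occurrence of the value T_i in T. Then defc(T) = #{type A or type B pairs in T} − Σ_{j=0}^{n−1} #{v ∈ {0,1,…,T_j−1} : v occurs at no position < j in T}. -/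
lemma sum_range_id_choose (n : ℕ) : ∑ j ∈ Finset.range n, j = n.choose 2 := by
  induction n with
  | zero => simp
  | succ m ih =>
    rw [Finset.sum_range_succ, ih, Nat.choose_succ_succ, Nat.choose_one_right]
    norm_num
    omega

lemma list_sum_eq (T : List ℤ) : T.sum = ∑ i ∈ Finset.range T.length, T.getD i 0 := by
  induction T with
  | nil => simp
  | cons a t ih =>
    rw [List.sum_cons, ih, List.length_cons, Finset.sum_range_succ']
    simp [add_comm]

lemma pairsum (n : ℕ) (Q : ℕ → ℕ → Prop)
    [DecidablePred fun p : ℕ × ℕ => p.1 < p.2 ∧ Q p.1 p.2]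
    [∀ j, DecidablePred fun i => Q i j] :
    ((Finset.range n ×ˢ Finset.range n).filter fun p => p.1 < p.2 ∧ Q p.1 p.2).card
      = ∑ j ∈ Finset.range n, ((Finset.range j).filter fun i => Q i j).card := by
  rw [Finset.card_filter, Finset.sum_product, Finset.sum_comm]
  refine Finset.sum_congr rfl fun j hj => ?_
  rw [Finset.card_filter]
  rw [← Finset.sum_subset (Finset.range_subset_range.2 (le_of_lt (Finset.mem_range.1 hj)))
    (fun i _ hi => if_neg (fun h => hi (Finset.mem_range.2 h.1)))]
  exact Finset.sum_congr rfl fun i hi => if_congr (by simp [Finset.mem_range.1 hi]) rfl rfl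

lemma perj (f : ℕ → ℤ) (j : ℕ) (hf : ∀ i, i ≤ j → 0 ≤ f i) :
    (j : ℤ) - f j
      - ((((Finset.range j).filter fun i => f i = f j + 1).card : ℤ)
         + (((Finset.range j).filter fun i => f i = f j).card : ℤ))
    = ((((Finset.range j).filter fun i =>
          f j + 1 < f i ∨ (f i < f j ∧ ∃ i' ∈ Finset.range i, f i' = f i)).card : ℤ))
      - (((Finset.Ico (0:ℤ) (f j)).filter fun v => ∀ p ∈ Finset.range j, f p ≠ v).card : ℤ) := by
  classical
  have h1 : ((Finset.range j).filter fun i => f i = f j + 1).card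
      + ((Finset.range j).filter fun i => f i = f j).card
      + ((Finset.range j).filter fun i => f j + 1 < f i).card
      + ((Finset.range j).filter fun i => f i < f j).card = j := by
    simp only [Finset.card_filter, ← Finset.sum_add_distrib]
    have hone : ∀ i ∈ Finset.range j,
        ((if f i = f j + 1 then (1:ℕ) else 0) + (if f i = f j then 1 else 0)
          + (if f j + 1 < f i then 1 else 0) + (if f i < f j then 1 else 0)) = 1 :=
      fun i _ => by split_ifs <;> omega
    rw [Finset.sum_congr rfl hone]
    simp
  have h2 : ((Finset.range j).filter fun i => f i < f j).card
      = ((Finset.range j).filter fun i =>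
            f i < f j ∧ ∃ i' ∈ Finset.range i, f i' = f i).card
        + ((Finset.range j).filter fun i =>
            f i < f j ∧ ∀ i' ∈ Finset.range i, f i' ≠ f i).card := by
    simp only [Finset.card_filter, ← Finset.sum_add_distrib]
    refine Finset.sum_congr rfl fun i _ => ?_
    rcases em (f i < f j) with hP | hP
    · rcases em (∃ i' ∈ Finset.range i, f i' = f i) with hE | hE
      · rw [if_pos hP, if_pos ⟨hP, hE⟩, if_neg (fun h => by
          obtain ⟨i', hi', he⟩ := hE; exact h.2 i' hi' he)]
      · rw [if_pos hP, if_neg (fun h => hE h.2), if_pos ⟨hP, fun i' hi' he => hE ⟨i', hi', he⟩⟩]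
    · rw [if_neg hP, if_neg (fun h => hP h.1), if_neg (fun h => hP h.1)]
  have h3 : ((Finset.range j).filter fun i =>
        f j + 1 < f i ∨ (f i < f j ∧ ∃ i' ∈ Finset.range i, f i' = f i)).card
      = ((Finset.range j).filter fun i => f j + 1 < f i).card
        + ((Finset.range j).filter fun i =>
            f i < f j ∧ ∃ i' ∈ Finset.range i, f i' = f i).card := by
    simp only [Finset.card_filter, ← Finset.sum_add_distrib]
    refine Finset.sum_congr rfl fun i _ => ?_
    rcases em (f j + 1 < f i) with hA | hA
    · rw [if_pos (Or.inl hA), if_pos hA, if_neg (fun h => by have := h.1; omega)]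
    · rcases em (f i < f j ∧ ∃ i' ∈ Finset.range i, f i' = f i) with hB | hB
      · rw [if_pos (Or.inr hB), if_neg hA, if_pos hB]
      · rw [if_neg (fun h => h.elim hA hB), if_neg hA, if_neg hB]
  have h4 : ((Finset.range j).filter fun i =>
        f i < f j ∧ ∀ i' ∈ Finset.range i, f i' ≠ f i).card
      = ((Finset.Ico (0:ℤ) (f j)).filter fun v => ∃ p ∈ Finset.range j, f p = v).card := by
    apply Finset.card_bij (fun i _ => f i)
    · intro i hi
      simp only [Finset.mem_filter, Finset.mem_range] at hi
      simp only [Finset.mem_filter, Finset.mem_Ico]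
      exact ⟨⟨hf i (le_of_lt hi.1), hi.2.1⟩, i, Finset.mem_range.2 hi.1, rfl⟩
    · intro i1 h1 i2 h2 he
      simp only [Finset.mem_filter, Finset.mem_range] at h1 h2
      by_contra hne
      rcases Nat.lt_or_ge i1 i2 with h | h
      · exact h2.2.2 i1 h he
      · exact h1.2.2 i2 (lt_of_le_of_ne h (Ne.symm hne)) he.symm
    · intro v hv
      simp only [Finset.mem_filter, Finset.mem_Ico] at hv
      obtain ⟨⟨hv0, hvj⟩, p, hpj, hpv⟩ := hv
      have hex : ∃ i, i < j ∧ f i = v := ⟨p, Finset.mem_range.1 hpj, hpv⟩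
      refine ⟨Nat.find hex, ?_, (Nat.find_spec hex).2⟩
      simp only [Finset.mem_filter, Finset.mem_range]
      refine ⟨(Nat.find_spec hex).1, by rw [(Nat.find_spec hex).2]; exact hvj, ?_⟩
      intro i' hi' hc
      exact Nat.find_min hex hi' ⟨lt_trans hi' (Nat.find_spec hex).1,
        hc.trans (Nat.find_spec hex).2⟩
  have h5 : ((Finset.Ico (0:ℤ) (f j)).filter fun v => ∃ p ∈ Finset.range j, f p = v).card
      + ((Finset.Ico (0:ℤ) (f j)).filter fun v => ∀ p ∈ Finset.range j, f p ≠ v).card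
      = (f j).toNat := by
    have hc : (Finset.Ico (0:ℤ) (f j)).card = (f j).toNat := by
      rw [Int.card_Ico]; simp
    rw [← hc]
    have hpart := Finset.card_filter_add_card_filter_not
      (s := Finset.Ico (0:ℤ) (f j)) (p := fun v => ∃ p ∈ Finset.range j, f p = v)
    rw [← hpart]
    congr 1
    refine congrArg Finset.card (Finset.filter_congr fun v _ => ?_)
    simp
  have htn : ((f j).toNat : ℤ) = f j := Int.toNat_of_nonneg (hf j le_rfl)
  omega



/-- **Arbitrary-word deficit correction.**  For any finite word
`T = (T_0,…,T_{n−1})` of nonnegative integers, `defc(T)` equals the number of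
type A pairs (`T_i > T_j + 1`) plus type B pairs (`T_i < T_j` with `i` not
the first occurrence of `T_i`), minus, for each position `j`, the number of
values `v ∈ {0,…,T_j − 1}` occurring at no position `< j`. -/
theorem extended_deficit_pairs (T : List ℤ) (hT : ∀ a ∈ T, 0 ≤ a) :
    defc T =
      (((Finset.range T.length ×ˢ Finset.range T.length).filter
        (fun p => p.1 < p.2 ∧
          (T.getD p.2 0 + 1 < T.getD p.1 0 ∨
            (T.getD p.1 0 < T.getD p.2 0 ∧
              ∃ i ∈ Finset.range p.1, T.getD i 0 = T.getD p.1 0)))).card : ℤ) -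
      ∑ j ∈ Finset.range T.length,
        (((Finset.Ico (0 : ℤ) (T.getD j 0)).filter
          (fun v => ∀ p ∈ Finset.range j, T.getD p 0 ≠ v)).card : ℤ) := by
  have hf : ∀ i, i < T.length → 0 ≤ T.getD i 0 := by
    intro i hi
    rw [List.getD_eq_getElem T 0 hi]
    exact hT _ (List.getElem_mem hi)
  rw [defc, dinv, di, nv, area, list_sum_eq]
  rw [pairsum T.length (fun i j => T.getD i 0 = T.getD j 0 + 1),
      pairsum T.length (fun i j => T.getD i 0 = T.getD j 0),
      pairsum T.length (fun i j => T.getD j 0 + 1 < T.getD i 0 ∨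
        (T.getD i 0 < T.getD j 0 ∧ ∃ i' ∈ Finset.range i, T.getD i' 0 = T.getD i 0))]
  rw [← sum_range_id_choose T.length]
  push_cast
  rw [← Finset.sum_add_distrib, ← Finset.sum_sub_distrib, ← Finset.sum_sub_distrib,
      ← Finset.sum_sub_distrib]
  refine Finset.sum_congr rfl fun j hj => ?_
  exact perj (fun i => T.getD i 0) j (fun i hij => hf i (lt_of_le_of_lt hij (Finset.mem_range.1 hj)))
end

section
/- If S is a full Dyck skeleton, then area(S) ≤ defc(S). -/
/-- An index `j` of `C` is *eligible* if there is exactly one index `i < j`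
with `C i = C j − 1`, and either `j` is the final index or the next entry is
at most `C j`. -/
def Eligible (C : List ℤ) (j : ℕ) : Prop :=
  j < C.length ∧
  ((Finset.range j).filter (fun i => C.getD i 0 = C.getD j 0 - 1)).card = 1 ∧
  (j + 1 = C.length ∨ C.getD (j + 1) 0 ≤ C.getD j 0)

/-- A *full Dyck skeleton*: an ordinary Dyck sequence with no eligible index. -/
def FullSkeleton (S : List ℤ) : Prop := OrdDyck S ∧ ∀ j, ¬ Eligible S j

/-!
In a full skeleton every value `v < S j` occurs at least twice before position `j`. Indeed, at
the first occurrence `k` of `v + 1` all earlier entries are smaller; if `v` occurred only once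
before `k`, then `k` would be eligible unless the sequence climbs, and the climb reproduces the
same situation one step later, so it would go on up to the last index, which is then eligible.
Hence `2 * S j ≤ #{i < j | S i < S j}`, so `2 * area S` is at most the number of pairs `i < j`
with `S i < S j`. These pairs are disjoint from those counted by `dinv`, which gives
`2 * area S + dinv S ≤ C(n, 2)`.
-/

open Finset

theorem List.sum_eq_sum_range_getD (x : List ℤ) :
    x.sum = ∑ i ∈ Finset.range x.length, x.getD i 0 := by
  induction x with
  | nil => simp
  | cons a l ih => simp [Finset.sum_range_succ', ih, add_comm]

theorem card_filter_pairs_lt_eq_sum (n : ℕ) (q : ℕ × ℕ → Prop) [DecidablePred q] :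
    #{p ∈ range n ×ˢ range n | p.1 < p.2 ∧ q p} = ∑ j ∈ range n, #{i ∈ range j | q (i, j)} := by
  rw [card_filter, sum_product_right]
  refine sum_congr rfl fun j hj => ?_
  rw [← card_filter]
  congr 1
  ext i
  simp only [mem_filter, mem_range]
  have := mem_range.mp hj
  exact ⟨fun ⟨_, h⟩ => h, fun ⟨hi, h⟩ => ⟨by omega, hi, h⟩⟩

theorem dinv_add_sum_card_lt_le_choose_two (x : List ℤ) :
    dinv x + ∑ j ∈ range x.length, #{i ∈ range j | x.getD i 0 < x.getD j 0} ≤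
      x.length.choose 2 := by
  simp only [dinv, di, nv, card_filter_pairs_lt_eq_sum]
  rw [← sum_add_distrib, ← sum_add_distrib, Nat.choose_two_right, ← sum_range_id]
  refine sum_le_sum fun j _ => ?_
  simp only [card_filter, ← sum_add_distrib]
  calc _ ≤ ∑ _i ∈ range j, 1 := sum_le_sum fun i _ => by split_ifs <;> omega
    _ = j := by simp

theorem AffineDyck.getD_succ_le {x : List ℤ} (h : AffineDyck x) {i : ℕ} (hi : i + 1 < x.length) :
    x.getD (i + 1) 0 ≤ x.getD i 0 + 1 := by
  rw [List.getD_eq_getElem _ _ hi, List.getD_eq_getElem _ _ (by omega)]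
  exact List.isChain_iff_getElem.mp h i hi

theorem OrdDyck.getD_nonneg {x : List ℤ} (h : OrdDyck x) (i : ℕ) : 0 ≤ x.getD i 0 := by
  by_cases hi : i < x.length
  · rw [List.getD_eq_getElem _ _ hi]
    exact h.2.2.2 _ (List.getElem_mem hi)
  · rw [List.getD_eq_default _ _ (not_lt.mp hi)]

theorem OrdDyck.exists_le_getD_eq {x : List ℤ} (h : OrdDyck x) {j : ℕ} (hj : j < x.length)
    {v : ℤ} (hv₀ : 0 ≤ v) (hv : v ≤ x.getD j 0) : ∃ i ≤ j, x.getD i 0 = v := by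
  induction j with
  | zero => exact ⟨0, le_rfl, by rw [h.2.2.1] at hv ⊢; omega⟩
  | succ j ih =>
    by_cases hvj : v ≤ x.getD j 0
    · obtain ⟨i, hij, hi⟩ := ih (by omega) hvj
      exact ⟨i, by omega, hi⟩
    · have := h.2.1.getD_succ_le hj
      exact ⟨j + 1, le_rfl, by omega⟩

theorem FullSkeleton.card_pred_ne_one_of_record {S : List ℤ} (hS : FullSkeleton S) {k : ℕ}
    (hk : k < S.length) (hrec : ∀ i < k, S.getD i 0 < S.getD k 0) :
    #{i ∈ range k | S.getD i 0 = S.getD k 0 - 1} ≠ 1 := by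
  intro hone
  have hclimb : k + 1 < S.length ∧ S.getD k 0 < S.getD (k + 1) 0 := by
    have := hS.2 k
    simp only [Eligible, not_and, not_or, not_le] at this
    obtain ⟨_, hup⟩ := this hk hone
    exact ⟨by omega, hup⟩
  have hstep := hS.1.2.1.getD_succ_le hclimb.1
  have hrec' : ∀ i < k + 1, S.getD i 0 < S.getD (k + 1) 0 := by
    intro i hi
    rcases Nat.lt_succ_iff_lt_or_eq.mp hi with hi | rfl
    · have := hrec i hi; omega
    · omega
  refine card_pred_ne_one_of_record hS hclimb.1 hrec' (card_eq_one.mpr ⟨k, ?_⟩)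
  ext i
  simp only [mem_filter, mem_range, mem_singleton]
  constructor
  · rintro ⟨hi, heq⟩
    by_contra hik
    have := hrec i (by omega)
    omega
  · rintro rfl
    exact ⟨by omega, by omega⟩
termination_by S.length - k

theorem FullSkeleton.two_le_card_getD_eq {S : List ℤ} (hS : FullSkeleton S) {j : ℕ}
    (hj : j < S.length) {v : ℤ} (hv₀ : 0 ≤ v) (hv : v < S.getD j 0) :
    2 ≤ #{i ∈ range j | S.getD i 0 = v} := by
  have hex : ∃ k, k ≤ j ∧ S.getD k 0 = v + 1 := hS.1.exists_le_getD_eq hj (by omega) hv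
  obtain ⟨hkj, hk⟩ := Nat.find_spec hex
  set k := Nat.find hex
  have hrec : ∀ i < k, S.getD i 0 < S.getD k 0 := by
    intro i hik
    by_contra! hge
    obtain ⟨i', hi'i, hi'⟩ := hS.1.exists_le_getD_eq (by omega) (by omega) (hk ▸ hge)
    exact Nat.find_min hex (lt_of_le_of_lt hi'i hik) ⟨by omega, hi'⟩
  have hpos : 0 < #{i ∈ range k | S.getD i 0 = v} := by
    obtain ⟨i, hik, hi⟩ := hS.1.exists_le_getD_eq (j := k) (by omega) hv₀ (by omega)
    have hik' : i < k := lt_of_le_of_ne hik (by rintro rfl; omega)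
    exact card_pos.mpr ⟨i, mem_filter.mpr ⟨mem_range.mpr hik', hi⟩⟩
  have hne := hS.card_pred_ne_one_of_record (by omega) hrec
  rw [hk, add_sub_cancel_right] at hne
  calc 2 ≤ #{i ∈ range k | S.getD i 0 = v} := by omega
    _ ≤ #{i ∈ range j | S.getD i 0 = v} :=
      card_le_card (filter_subset_filter _ (range_subset_range.mpr hkj))

theorem FullSkeleton.two_mul_getD_le_card_lt {S : List ℤ} (hS : FullSkeleton S) {j : ℕ}
    (hj : j < S.length) : 2 * S.getD j 0 ≤ (#{i ∈ range j | S.getD i 0 < S.getD j 0} : ℤ) := by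
  have hfib := card_eq_sum_card_fiberwise (f := fun i => S.getD i 0)
    (s := {i ∈ range j | S.getD i 0 < S.getD j 0}) (t := Ico 0 (S.getD j 0))
    fun i hi => mem_Ico.mpr ⟨hS.1.getD_nonneg i, (mem_filter.mp hi).2⟩
  rw [hfib]
  push_cast
  calc 2 * S.getD j 0 = ∑ _v ∈ Ico 0 (S.getD j 0), (2 : ℤ) := by
        rw [sum_const, nsmul_eq_mul, Int.card_Ico_of_le _ _ (hS.1.getD_nonneg j)]
        ring
    _ ≤ _ := sum_le_sum fun v hv => by
      obtain ⟨hv₀, hvj⟩ := mem_Ico.mp hv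
      have hsub : {i ∈ range j | S.getD i 0 = v} ⊆
          {i ∈ {i ∈ range j | S.getD i 0 < S.getD j 0} | S.getD i 0 = v} := by
        intro i hi
        simp only [mem_filter] at hi ⊢
        exact ⟨⟨hi.1, hi.2 ▸ hvj⟩, hi.2⟩
      exact_mod_cast (hS.two_le_card_getD_eq hj hv₀ hvj).trans (card_le_card hsub)

theorem FullSkeleton.two_mul_area_le {S : List ℤ} (hS : FullSkeleton S) :
    2 * area S ≤ ∑ j ∈ range S.length, (#{i ∈ range j | S.getD i 0 < S.getD j 0} : ℤ) := by
  rw [area, List.sum_eq_sum_range_getD, mul_sum]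
  exact sum_le_sum fun j hj => hS.two_mul_getD_le_card_lt (mem_range.mp hj)

/-- **Area bound for full skeletons.**  If `S` is a full Dyck skeleton, then
`area(S) ≤ defc(S)`. -/
theorem area_le_defc (S : List ℤ) (hS : FullSkeleton S) :
    area S ≤ defc S := by
  have hpairs : (dinv S : ℤ) +
      ∑ j ∈ range S.length, (#{i ∈ range j | S.getD i 0 < S.getD j 0} : ℤ) ≤
        S.length.choose 2 := by
    exact_mod_cast dinv_add_sum_card_lt_le_choose_two S
  have harea := hS.two_mul_area_le
  rw [defc]
  linarith
end
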